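/- Let D be a triangulated category and let B, C be strict full triangulated subcategories of D with Hom_D(B,C) = 0 for all B ∈ B, C ∈ C. Assume that for every object A of D there exists a distinguished triangle B → A → C → B[1] with B ∈ B and C ∈ C. Then the inclusion functor j_* : C → D admits a left adjoint j^* : D → C. -/

import Mathlib

open CategoryTheory Limits Pretriangulated

universe v u

namespace CategoryTheory.Triangulated

/-- A triangulated subcategory (the structure `Triangulated.Subcategory` of the older Mathlib). -/
structure Subcategory (C : Type*) [Category C] [HasZeroObject C] [HasShift C ℤ] [Preadditive C]
    [∀ n : ℤ, (shiftFunctor C n).Additive] [Pretriangulated C] where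
  P : C → Prop
  zero' : ∃ (Z : C) (_ : IsZero Z), P Z
  shift (X : C) (n : ℤ) : P X → P (X⟦n⟧)
  ext₂' (T : Triangle C) (_ : T ∈ distTriang C) : P T.obj₁ → P T.obj₃ →
    ObjectProperty.isoClosure P T.obj₂

end CategoryTheory.Triangulated

/-!
The decomposition triangle `X → A → Y → X⟦1⟧` rotates to `A → Y → X⟦1⟧ → A⟦1⟧`, so `A → Y` is a
morphism whose cone lies in `B`. Objects right orthogonal to a triangulated subcategory are local
with respect to all such morphisms (long exact `Hom(-, Z)` sequence), so `A → Y` is a reflection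
of `A` into `C`; reflections of every object corepresent `Hom(A, -)` on `C` and assemble into the
left adjoint.
-/

namespace CategoryTheory

namespace ObjectProperty

variable {E : Type*} [Category E]

lemma isRightAdjoint_ι_of_exists_isLocal (P : ObjectProperty E)
    (h : ∀ A : E, ∃ (Y : E) (g : A ⟶ Y), P Y ∧ P.isLocal g) : P.ι.IsRightAdjoint := by
  refine Functor.isRightAdjoint_of_leftAdjointObjIsDefined_eq_top (top_unique fun A _ ↦ ?_)
  obtain ⟨Y, g, hY, hg⟩ := h A
  let e : (P.ι ⋙ coyoneda.obj (.op A)).CorepresentableBy ⟨Y, hY⟩ :=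
    { homEquiv := fun {Z} ↦ P.fullyFaithfulι.homEquiv.trans (hg.homEquiv Z.obj Z.property)
      homEquiv_comp := fun _ _ ↦ by simp [Functor.FullyFaithful.homEquiv] }
  exact e.isCorepresentable

variable [HasZeroObject E] [HasShift E ℤ] [Preadditive E]
  [∀ n : ℤ, (shiftFunctor E n).Additive] [Pretriangulated E]

lemma trW_le_isLocal_of_le_rightOrthogonal (P Q : ObjectProperty E) [P.IsTriangulated]
    (h : Q ≤ P.rightOrthogonal) : P.trW ≤ Q.isLocal :=
  (le_isLocal_iff Q P.trW).2 (P.isLocal_trW ▸ h)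

end ObjectProperty

instance Triangulated.Subcategory.isTriangulated {E : Type*} [Category E] [HasZeroObject E]
    [HasShift E ℤ] [Preadditive E] [∀ n : ℤ, (shiftFunctor E n).Additive] [Pretriangulated E]
    (S : Triangulated.Subcategory E) : ObjectProperty.IsTriangulated S.P where
  exists_zero := let ⟨Z, hZ, hS⟩ := S.zero'; ⟨Z, hZ, hS⟩
  isStableUnderShiftBy n := ⟨fun X ↦ S.shift X n⟩
  ext₂' := S.ext₂'

end CategoryTheory

/-- For a semiorthogonal pair `(B, C)` of strict full triangulated subcategories of a
triangulated category `D` such that every object admits a decomposition triangle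
`B → A → C → B[1]`, the inclusion `j_* : C → D` admits a left adjoint. -/
theorem inclusion_right_part_isRightAdjoint
    {D : Type u} [Category.{v} D] [HasZeroObject D] [HasShift D ℤ] [Preadditive D]
    [∀ n : ℤ, (shiftFunctor D n).Additive] [Pretriangulated D] [IsTriangulated D]
    (B C : Triangulated.Subcategory D)
    [ObjectProperty.IsClosedUnderIsomorphisms B.P] [ObjectProperty.IsClosedUnderIsomorphisms C.P]
    (horth : ∀ (X Y : D), B.P X → C.P Y → ∀ f : X ⟶ Y, f = 0)
    (hdec : ∀ A : D, ∃ (X Y : D) (f : X ⟶ A) (g : A ⟶ Y) (h : Y ⟶ X⟦(1 : ℤ)⟧),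
      B.P X ∧ C.P Y ∧ Triangle.mk f g h ∈ distTriang D) :
    (ObjectProperty.ι C.P).IsRightAdjoint := by
  have hC : C.P ≤ ObjectProperty.rightOrthogonal B.P := fun _ hY _ f hX ↦ horth _ _ hX hY f
  refine ObjectProperty.isRightAdjoint_ι_of_exists_isLocal C.P fun A ↦ ?_
  obtain ⟨X, Y, f, g, h, hX, hY, hT⟩ := hdec A
  have hg : ObjectProperty.trW B.P g := ObjectProperty.trW.mk' B.P hT hX
  exact ⟨Y, g, hY, ObjectProperty.trW_le_isLocal_of_le_rightOrthogonal B.P C.P hC g hg⟩
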